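/- arXiv:1408.1103 — 5 statements merged into one kernel-verified Lean document; each statement's English description precedes it below -/
import Mathlib

section
/- Let X be a Hilbert space, K a closed subspace, and A ∈ B(X) boundedly invertible with A - I compact. If M is a closed subspace such that (A(K), M) is a Fredholm pair, then (K, M) is a Fredholm pair. -/
/-!
A pair `(K, M)` of closed subspaces is Fredholm exactly when `P ∘ ι_K : K → Mᗮ` is a Fredholm
operator, `P` being the orthogonal projection onto `Mᗮ`: its kernel is `K ∩ M` and its cokernel is
`X / (K + M)`. The pair `(A(K), M)` corresponds in the same way to `P ∘ A ∘ ι_K`, which differs from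
`P ∘ ι_K` by the compact operator `P ∘ (A - 1) ∘ ι_K`. So the theorem is the stability of
Fredholmness under compact perturbations: a Fredholm `T` has an inverse `G` modulo compact operators
(invert `T : (ker T)ᗮ → range T`), `G` remains one for `T + C` when `C` is compact, and then
`ker (T + C) ⊆ ker (1 + D₁)` and `range (T + C) ⊇ range (1 + D₂)` with `D₁, D₂` compact, whose
kernel and cokernel are finite dimensional by the Riesz theory of `1 + compact`.
-/

open Filter Topology
open scoped InnerProductSpace

section Banach

variable {E G : Type*} [NormedAddCommGroup E] [NormedSpace ℝ E]
  [NormedAddCommGroup G] [NormedSpace ℝ G]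

theorem FiniteDimensional.of_norm_le_norm_isCompactOperator [CompleteSpace E] {D : E →L[ℝ] G}
    (hD : IsCompactOperator D) {V : Submodule ℝ E} (hV : IsClosed (V : Set E))
    (hle : ∀ u ∈ V, ‖u‖ ≤ ‖D u‖) : FiniteDimensional ℝ V := by
  have : CompleteSpace V := hV.completeSpace_coe
  set f := D ∘L V.subtypeL
  have hf : AntilipschitzWith 1 f := f.antilipschitz_of_bound fun u => by simpa [f] using hle u u.2
  have hfc : IsCompactOperator f := hD.comp_clm V.subtypeL
  obtain ⟨C, hC, hfC⟩ := hfc.image_closedBall_subset_compact 1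
  refine FiniteDimensional.of_isCompact_closedBall₀ ℝ one_pos ?_
  exact ((hf.isClosedEmbedding f.uniformContinuous).isCompact_preimage hC).of_isClosed_subset
    Metric.isClosed_closedBall (Set.image_subset_iff.1 hfC)

theorem finiteDimensional_ker_one_add [CompleteSpace E] {D : E →L[ℝ] E}
    (hD : IsCompactOperator D) : FiniteDimensional ℝ (1 + D).ker :=
  .of_norm_le_norm_isCompactOperator hD (1 + D).isClosed_ker fun u hu => by
    rw [← norm_neg (D u), ← eq_neg_of_add_eq_zero_left (show u + D u = 0 by simpa using hu)]

theorem exists_pos_mul_norm_le_one_add_of_disjoint_ker {D : E →L[ℝ] E} (hD : IsCompactOperator D)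
    {W : Submodule ℝ E} (hW : IsClosed (W : Set E)) (hWker : Disjoint W (1 + D).ker) :
    ∃ c > 0, ∀ w ∈ W, c * ‖w‖ ≤ ‖(1 + D) w‖ := by
  by_contra! h
  have hseq (n : ℕ) : ∃ u ∈ W, ‖u‖ = 1 ∧ ‖(1 + D) u‖ < 1 / (n + 1) := by
    obtain ⟨w, hwW, hw⟩ := h (1 / (n + 1)) (by positivity)
    have hw0 : w ≠ 0 := by rintro rfl; simp at hw
    refine ⟨‖w‖⁻¹ • w, W.smul_mem _ hwW, norm_smul_inv_norm hw0, ?_⟩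
    rw [map_smul, norm_smul, norm_inv, norm_norm, inv_mul_lt_iff₀ (norm_pos_iff.2 hw0)]
    linarith
  choose u huW hu1 hSu using hseq
  obtain ⟨C, hC, hDC⟩ := hD.image_closedBall_subset_compact 1
  obtain ⟨a, -, φ, hφ, hDu⟩ := hC.tendsto_subseq fun n => hDC ⟨u n, by simp [hu1], rfl⟩
  have hSu : Tendsto (fun n => (1 + D) (u (φ n))) atTop (𝓝 0) :=
    squeeze_zero_norm (fun n => (hSu (φ n)).le)
      (tendsto_one_div_add_atTop_nhds_zero_nat.comp hφ.tendsto_atTop)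
  -- `u = (1 + D) u - D u`
  have hu : Tendsto (fun n => u (φ n)) atTop (𝓝 (-a)) := by
    simpa using hSu.sub hDu
  have haW : -a ∈ W := hW.mem_of_tendsto hu (Eventually.of_forall fun n => huW _)
  have haker : -a ∈ (1 + D).ker :=
    tendsto_nhds_unique (((1 + D).continuous.tendsto _).comp hu) hSu
  have ha1 : ‖-a‖ = 1 := tendsto_nhds_unique hu.norm (by simp [hu1])
  simp [Submodule.disjoint_def.1 hWker _ haW haker] at ha1

end Banach

section Hilbert

variable {E F : Type*} [NormedAddCommGroup E] [InnerProductSpace ℝ E]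
  [NormedAddCommGroup F] [InnerProductSpace ℝ F]

theorem ContinuousLinearMap.apply_sub_starProjection_ker (T : E →L[ℝ] F)
    [T.ker.HasOrthogonalProjection] (x : E) : T (x - T.ker.starProjection x) = T x := by
  have h : T (T.ker.starProjection x) = 0 := T.ker.starProjection_apply_mem x
  rw [map_sub, h, sub_zero]

theorem ContinuousLinearMap.range_comp_subtypeL_orthogonal_ker (T : E →L[ℝ] F)
    [T.ker.HasOrthogonalProjection] : (T ∘L T.kerᗮ.subtypeL).range = T.range := by
  refine le_antisymm (fun _ ⟨w, hw⟩ => ⟨w, hw⟩) ?_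
  rintro _ ⟨x, rfl⟩
  exact ⟨⟨_, T.ker.sub_starProjection_mem_orthogonal x⟩, T.apply_sub_starProjection_ker x⟩

theorem Submodule.finiteDimensional_quotient_iff_orthogonal (R : Submodule ℝ F)
    [R.HasOrthogonalProjection] : FiniteDimensional ℝ (F ⧸ R) ↔ FiniteDimensional ℝ Rᗮ :=
  let e := R.quotientEquivOfIsCompl Rᗮ R.isCompl_orthogonal
  ⟨fun _ => e.finiteDimensional, fun _ => e.symm.finiteDimensional⟩

variable [CompleteSpace E] {D : E →L[ℝ] E}

theorem isClosed_range_one_add (hD : IsCompactOperator D) : IsClosed ((1 + D).range : Set E) := by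
  have := finiteDimensional_ker_one_add hD
  set N := (1 + D).ker
  obtain ⟨c, hc, hbound⟩ := exists_pos_mul_norm_le_one_add_of_disjoint_ker hD
    N.isClosed_orthogonal N.orthogonal_disjoint.symm
  obtain ⟨K, hK⟩ := antilipschitzWith_iff_exists_mul_le_norm (f := (1 + D) ∘L Nᗮ.subtypeL) |>.2
    ⟨c, hc, fun w => hbound w w.2⟩
  rw [← (1 + D).range_comp_subtypeL_orthogonal_ker, LinearMap.coe_range]
  exact hK.isClosed_range ((1 + D) ∘L Nᗮ.subtypeL).uniformContinuous

theorem finiteDimensional_orthogonal_range_one_add (hD : IsCompactOperator D) :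
    FiniteDimensional ℝ (1 + D).rangeᗮ := by
  refine .of_norm_le_norm_isCompactOperator hD (Submodule.isClosed_orthogonal _) fun u hu => ?_
  have h0 : ⟪(1 + D) u, u⟫_ℝ = 0 :=
    (Submodule.mem_orthogonal _ _).1 hu _ (LinearMap.mem_range_self _ u)
  have h : ‖u‖ * ‖u‖ ≤ ‖D u‖ * ‖u‖ := by
    calc ‖u‖ * ‖u‖ = -⟪D u, u⟫_ℝ := by
          rw [← real_inner_self_eq_norm_mul_norm]
          simpa [inner_add_left, ← eq_neg_iff_add_eq_zero] using h0
      _ ≤ ‖D u‖ * ‖u‖ := (neg_le_abs _).trans (abs_real_inner_le_norm _ _)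
  nlinarith [norm_nonneg u, norm_nonneg (D u)]

theorem finiteDimensional_quotient_range_one_add (hD : IsCompactOperator D) :
    FiniteDimensional ℝ (E ⧸ (1 + D).range) := by
  have : CompleteSpace (1 + D).range := (isClosed_range_one_add hD).completeSpace_coe
  exact (Submodule.finiteDimensional_quotient_iff_orthogonal _).2
    (finiteDimensional_orthogonal_range_one_add hD)

end Hilbert

theorem ContinuousLinearMap.isClosed_range_of_finiteDimensional_quotient
    {E F : Type*} [NormedAddCommGroup E] [NormedSpace ℝ E] [CompleteSpace E]
    [NormedAddCommGroup F] [NormedSpace ℝ F] [CompleteSpace F]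
    (T : E →L[ℝ] F) [FiniteDimensional ℝ (F ⧸ T.range)] : IsClosed (T.range : Set F) := by
  obtain ⟨Q, hQ⟩ := T.range.exists_isCompl
  have : FiniteDimensional ℝ Q := (T.range.quotientEquivOfIsCompl Q hQ).finiteDimensional
  set S := T.coprod Q.subtypeL
  have hS : Function.Surjective S := LinearMap.range_eq_top.1 <| by
    simpa [S, LinearMap.range_coprod] using hQ.sup_eq_top
  have hpre : S ⁻¹' T.range = Prod.snd ⁻¹' {0} := by
    ext ⟨x, q⟩
    simp only [Set.mem_preimage, SetLike.mem_coe, Set.mem_singleton_iff, S,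
      ContinuousLinearMap.coprod_apply, Submodule.subtypeL_apply]
    have hx : T x ∈ T.range := ⟨x, rfl⟩
    rw [T.range.add_mem_iff_right hx]
    exact ⟨fun hq => Subtype.ext (Submodule.disjoint_def.1 hQ.disjoint _ hq q.2),
      fun hq => hq ▸ T.range.zero_mem⟩
  -- `S` is a quotient map by the open mapping theorem
  rw [← (S.isQuotientMap hS).isClosed_preimage, hpre]
  exact isClosed_singleton.preimage continuous_snd

section Parametrix

variable {E F : Type*} [NormedAddCommGroup E] [InnerProductSpace ℝ E]
  [NormedAddCommGroup F] [InnerProductSpace ℝ F]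

structure IsCompactParametrix (G : F →L[ℝ] E) (T : E →L[ℝ] F) : Prop where
  isCompactOperator_left : IsCompactOperator ⇑(G ∘L T - 1)
  isCompactOperator_right : IsCompactOperator ⇑(T ∘L G - 1)

variable {G : F →L[ℝ] E} {T : E →L[ℝ] F}

theorem IsCompactParametrix.add_isCompactOperator (hG : IsCompactParametrix G T)
    {C : E →L[ℝ] F} (hC : IsCompactOperator C) : IsCompactParametrix G (T + C) := by
  constructor
  · have : G ∘L (T + C) - 1 = (G ∘L T - 1) + G ∘L C := by
      rw [ContinuousLinearMap.comp_add]; abel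
    rw [this]
    exact hG.isCompactOperator_left.add (hC.clm_comp G)
  · have : (T + C) ∘L G - 1 = (T ∘L G - 1) + C ∘L G := by
      rw [ContinuousLinearMap.add_comp]; abel
    rw [this]
    exact hG.isCompactOperator_right.add (hC.comp_clm G)

theorem IsCompactParametrix.finiteDimensional_ker [CompleteSpace E]
    (hG : IsCompactParametrix G T) : FiniteDimensional ℝ T.ker := by
  have := finiteDimensional_ker_one_add hG.isCompactOperator_left
  rw [add_sub_cancel] at this
  exact Submodule.finiteDimensional_of_le (S₂ := (G ∘L T).ker)
    (LinearMap.ker_le_ker_comp (T : E →ₗ[ℝ] F) (G : F →ₗ[ℝ] E))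

theorem IsCompactParametrix.finiteDimensional_quotient_range [CompleteSpace F]
    (hG : IsCompactParametrix G T) : FiniteDimensional ℝ (F ⧸ T.range) := by
  have := finiteDimensional_quotient_range_one_add hG.isCompactOperator_right
  rw [add_sub_cancel] at this
  exact Submodule.CoFG.of_le
    (LinearMap.range_comp_le_range (G : F →ₗ[ℝ] E) (T : E →ₗ[ℝ] F)) this

theorem Submodule.isCompactOperator_starProjection (K : Submodule ℝ E) [FiniteDimensional ℝ K] :
    IsCompactOperator K.starProjection :=
  (isCompactOperator_of_locallyCompactSpace_dom K.orthogonalProjectionOnto).clm_comp K.subtypeL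

theorem exists_isCompactParametrix [CompleteSpace E] [CompleteSpace F] (T : E →L[ℝ] F)
    [FiniteDimensional ℝ T.ker] [FiniteDimensional ℝ (F ⧸ T.range)] :
    ∃ G, IsCompactParametrix G T := by
  set N := T.ker
  set R := T.range
  have : CompleteSpace R := T.isClosed_range_of_finiteDimensional_quotient.completeSpace_coe
  have : FiniteDimensional ℝ Rᗮ := R.finiteDimensional_quotient_iff_orthogonal.1 ‹_›
  set f : Nᗮ →L[ℝ] R := (T ∘L Nᗮ.subtypeL).codRestrict R fun w => ⟨w, rfl⟩
  have hf_ker : f.ker = ⊥ := LinearMap.ker_eq_bot'.2 fun w hw =>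
    Subtype.ext (Submodule.disjoint_def.1 N.orthogonal_disjoint _ (congrArg Subtype.val hw) w.2)
  have hf (x : E) : f ⟨_, N.sub_starProjection_mem_orthogonal x⟩ = ⟨T x, x, rfl⟩ :=
    Subtype.ext (T.apply_sub_starProjection_ker x)
  have hf_range : f.range = ⊤ := by
    refine LinearMap.range_eq_top.2 ?_
    rintro ⟨_, x, rfl⟩
    exact ⟨_, hf x⟩
  set e := ContinuousLinearEquiv.ofBijective f hf_ker hf_range
  set G := Nᗮ.subtypeL ∘L (e.symm : R →L[ℝ] Nᗮ) ∘L R.orthogonalProjectionOnto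
  refine ⟨G, ⟨?_, ?_⟩⟩
  · have : G ∘L T - 1 = -N.starProjection := by
      ext x
      have hR : R.orthogonalProjectionOnto (T x) = ⟨T x, x, rfl⟩ :=
        R.orthogonalProjectionOnto_mem_subspace_eq_self ⟨T x, x, rfl⟩
      simp [G, hR, ← hf x, e]
    rw [this]
    exact N.isCompactOperator_starProjection.neg
  · have : T ∘L G - 1 = -Rᗮ.starProjection := by
      ext z
      have hTe (y : R) : T (e.symm y : E) = y := congrArg Subtype.val (e.apply_symm_apply y)
      simp [G, hTe, Submodule.starProjection_orthogonal']
    rw [this]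
    exact Rᗮ.isCompactOperator_starProjection.neg

theorem finiteDimensional_ker_and_quotient_range_of_isCompactOperator_sub [CompleteSpace E]
    [CompleteSpace F] {T T' : E →L[ℝ] F} [FiniteDimensional ℝ T.ker]
    [FiniteDimensional ℝ (F ⧸ T.range)] (hC : IsCompactOperator (T' - T)) :
    FiniteDimensional ℝ T'.ker ∧ FiniteDimensional ℝ (F ⧸ T'.range) := by
  obtain ⟨G, hG⟩ := exists_isCompactParametrix T
  have hG' := hG.add_isCompactOperator hC
  rw [add_sub_cancel] at hG'
  exact ⟨hG'.finiteDimensional_ker, hG'.finiteDimensional_quotient_range⟩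

end Parametrix

section Pair

variable {E X : Type*} [NormedAddCommGroup E] [NormedSpace ℝ E]
  [NormedAddCommGroup X] [InnerProductSpace ℝ X] (M : Submodule ℝ X) [M.HasOrthogonalProjection]

theorem Submodule.ker_orthogonalProjectionOnto_orthogonal :
    Mᗮ.orthogonalProjectionOnto.ker = M := by
  rw [Submodule.ker_orthogonalProjectionOnto, Submodule.orthogonal_orthogonal]

theorem finiteDimensional_ker_orthogonalProjectionOnto_comp_iff {f : E →L[ℝ] X}
    (hf : Function.Injective f) :
    FiniteDimensional ℝ (Mᗮ.orthogonalProjectionOnto ∘L f).ker ↔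
      FiniteDimensional ℝ ↥(f.range ⊓ M) := by
  have hker : (Mᗮ.orthogonalProjectionOnto ∘L f).ker = M.comap (f : E →ₗ[ℝ] X) := by
    rw [ContinuousLinearMap.toLinearMap_comp, LinearMap.ker_comp,
      M.ker_orthogonalProjectionOnto_orthogonal]
  rw [hker, ← Submodule.map_comap_eq]
  exact Module.Finite.equiv_iff (Submodule.equivMapOfInjective (f : E →ₗ[ℝ] X) hf _)

theorem finiteDimensional_quotient_range_orthogonalProjectionOnto_comp_iff (f : E →L[ℝ] X) :
    FiniteDimensional ℝ (Mᗮ ⧸ (Mᗮ.orthogonalProjectionOnto ∘L f).range) ↔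
      FiniteDimensional ℝ (X ⧸ (f.range ⊔ M)) := by
  set P := Mᗮ.orthogonalProjectionOnto
  set q := (P ∘L f).range.mkQ ∘ₗ (P : X →ₗ[ℝ] Mᗮ)
  have hq : Function.Surjective q := (Submodule.mkQ_surjective _).comp fun y =>
    ⟨y, Mᗮ.orthogonalProjectionOnto_mem_subspace_eq_self y⟩
  have hker : q.ker = f.range ⊔ M := by
    rw [LinearMap.ker_comp, Submodule.ker_mkQ, ContinuousLinearMap.toLinearMap_comp,
      LinearMap.range_comp, Submodule.comap_map_eq, M.ker_orthogonalProjectionOnto_orthogonal]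
  exact (Module.Finite.equiv_iff
    ((Submodule.quotEquivOfEq _ _ hker.symm).trans (q.quotKerEquivOfSurjective hq))).symm

end Pair

/-- If `A` is boundedly invertible with `A - I` compact and `(A(K), M)` is a Fredholm
pair of closed subspaces, then `(K, M)` is a Fredholm pair. -/
theorem statement2 {X : Type*} [NormedAddCommGroup X] [InnerProductSpace ℝ X]
    [CompleteSpace X]
    (A : X →L[ℝ] X) (hA : IsUnit A) (hAc : IsCompactOperator (⇑(A - 1)))
    (K M : Submodule ℝ X) (hK : IsClosed (K : Set X)) (hM : IsClosed (M : Set X))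
    (hFred : FiniteDimensional ℝ ↥(K.map (A : X →ₗ[ℝ] X) ⊓ M) ∧
      FiniteDimensional ℝ (X ⧸ (K.map (A : X →ₗ[ℝ] X) ⊔ M))) :
    FiniteDimensional ℝ ↥(K ⊓ M) ∧ FiniteDimensional ℝ (X ⧸ (K ⊔ M)) := by
  have : CompleteSpace K := hK.completeSpace_coe
  have : CompleteSpace M := hM.completeSpace_coe
  set P := Mᗮ.orthogonalProjectionOnto
  have hAinj : Function.Injective (A ∘L K.subtypeL) :=
    (ContinuousLinearMap.isUnit_iff_bijective.1 hA).1.comp Subtype.val_injective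
  have hrangeA : (A ∘L K.subtypeL).range = K.map (A : X →ₗ[ℝ] X) := by
    simp [LinearMap.range_comp]
  have hrange1 : K.subtypeL.range = K := by simp
  have : FiniteDimensional ℝ (P ∘L A ∘L K.subtypeL).ker := by
    rw [finiteDimensional_ker_orthogonalProjectionOnto_comp_iff M hAinj, hrangeA]
    exact hFred.1
  have : FiniteDimensional ℝ (Mᗮ ⧸ (P ∘L A ∘L K.subtypeL).range) := by
    rw [finiteDimensional_quotient_range_orthogonalProjectionOnto_comp_iff, hrangeA]
    exact hFred.2
  have hC : IsCompactOperator ⇑(P ∘L K.subtypeL - P ∘L A ∘L K.subtypeL) := by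
    have : P ∘L K.subtypeL - P ∘L A ∘L K.subtypeL = -(P ∘L (A - 1) ∘L K.subtypeL) := by
      ext; simp
    rw [this]
    exact ((hAc.comp_clm K.subtypeL).clm_comp P).neg
  obtain ⟨hker, hcoker⟩ := finiteDimensional_ker_and_quotient_range_of_isCompactOperator_sub hC
  rw [finiteDimensional_ker_orthogonalProjectionOnto_comp_iff M Subtype.val_injective,
    hrange1] at hker
  rw [finiteDimensional_quotient_range_orthogonalProjectionOnto_comp_iff, hrange1] at hcoker
  exact ⟨hker, hcoker⟩
end

section
/- Let X be a real Hilbert space with complex structure J (J ∈ B(X), J* = -J, J² = -I) and symplectic form ω(u,v) = ⟨Ju, v⟩. Let K be a Lagrangian subspace of X, and let L = A(K) where A ∈ B(X) is boundedly invertible with A - I compact. If ω vanishes on L (i.e. ω(u,v) = 0 for all u, v ∈ L), then L is Lagrangian. -/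
/-!
Let `P` be the orthogonal projection onto `K`. Maximality of `K` gives `J(Kᗮ) ⊆ K`, so every
`x` splits as `x = P x - J k` with `P x, k ∈ K`. The operator `B = A P - J A J (1 - P)`, which
sends `P x - J k` to `A (P x) - J (A k)`, is a compact perturbation of the identity, and it
is injective because `L = A(K)` is isotropic and `A` is injective.
By the Fredholm alternative `B` is onto, so every `w` has the form `A k₁ - J (A k₂)` with
`k₁, k₂ ∈ K`. If moreover `ω(w, L) = 0`, pairing with `A k₂ ∈ L` gives `‖A k₂‖² = 0`, hence
`w = A k₁ ∈ L`.
-/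

open ContinuousLinearMap

open scoped InnerProductSpace

open Module End in
theorem surjective_of_injective_of_isCompactOperator_sub_one {𝕜 X : Type*}
    [NontriviallyNormedField 𝕜] [NormedAddCommGroup X] [NormedSpace 𝕜 X] [CompleteSpace X]
    {B : X →L[𝕜] X} (hB : IsCompactOperator ⇑(B - 1)) (hinj : Function.Injective B) :
    Function.Surjective B := by
  have hnot : ¬ HasEigenvalue ((B - 1 : X →L[𝕜] X) : End 𝕜 X) (-1) := by
    intro h
    obtain ⟨x, hx⟩ := h.exists_hasEigenvector
    refine hx.2 (hinj ?_)
    simpa [sub_eq_iff_eq_add] using hx.apply_eq_smul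
  have := (hB.hasEigenvalue_or_mem_resolventSet (neg_ne_zero.2 one_ne_zero)).resolve_left hnot
  rw [spectrum.mem_resolventSet_iff, ← IsUnit.neg_iff, isUnit_iff_bijective] at this
  convert this.2 using 1
  ext x
  simp

theorem Submodule.isClosed_map_of_isUnit {X : Type*} [NormedAddCommGroup X] [NormedSpace ℝ X]
    {A : X →L[ℝ] X} (hA : IsUnit A) {K : Submodule ℝ X} (hK : IsClosed (K : Set X)) :
    IsClosed (K.map (A : X →ₗ[ℝ] X) : Set X) := by
  obtain ⟨a, rfl⟩ := hA
  rw [Submodule.map_coe]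
  exact (ContinuousLinearEquiv.unitsEquiv ℝ X a).toHomeomorph.isClosedMap _ hK

namespace Symplectic

variable {X : Type*} [NormedAddCommGroup X] [InnerProductSpace ℝ X] (J : X →L[ℝ] X)

def IsIsotropic (L : Submodule ℝ X) : Prop := ∀ u ∈ L, ∀ v ∈ L, ⟪J u, v⟫_ℝ = 0

def IsCoisotropic (K : Submodule ℝ X) : Prop := ∀ u, (∀ v ∈ K, ⟪J u, v⟫_ℝ = 0) → u ∈ K

variable {J}

theorem apply_apply_of_mul_self_eq_neg_one (hJ2 : J * J = -1) (x : X) : J (J x) = -x := by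
  simpa using DFunLike.congr_fun hJ2 x

theorem IsCoisotropic.apply_mem_of_mem_orthogonal {K : Submodule ℝ X} (hK : IsCoisotropic J K)
    (hJ2 : J * J = -1) {w : X} (hw : w ∈ Kᗮ) : J w ∈ K :=
  hK _ fun v hv => by
    rw [apply_apply_of_mul_self_eq_neg_one hJ2, inner_neg_left, neg_eq_zero]
    exact Submodule.inner_left_of_mem_orthogonal hv hw

theorem IsIsotropic.eq_zero_of_forall_inner_sub_apply {L : Submodule ℝ X} (hL : IsIsotropic J L)
    (hJ2 : J * J = -1) {u v : X} (hu : u ∈ L) (hv : v ∈ L)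
    (h : ∀ w ∈ L, ⟪J (u - J v), w⟫_ℝ = 0) : v = 0 := by
  have := h v hv
  rwa [map_sub, apply_apply_of_mul_self_eq_neg_one hJ2, sub_neg_eq_add, inner_add_left,
    hL u hu v hv, zero_add, inner_self_eq_zero] at this

/-- `A` on `K` and `J A J⁻¹ = -J A J` on `Kᗮ`. -/
noncomputable def conjExtension (J A : X →L[ℝ] X) (K : Submodule ℝ X)
    [K.HasOrthogonalProjection] : X →L[ℝ] X :=
  A ∘L K.starProjection - J ∘L A ∘L J ∘L (1 - K.starProjection)

variable {A : X →L[ℝ] X} {K : Submodule ℝ X} [K.HasOrthogonalProjection]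

theorem conjExtension_apply (x : X) :
    conjExtension J A K x = A (K.starProjection x) - J (A (J (x - K.starProjection x))) := rfl

theorem isCompactOperator_conjExtension_sub_one (hJ2 : J * J = -1)
    (hA : IsCompactOperator ⇑(A - 1)) : IsCompactOperator ⇑(conjExtension J A K - 1) := by
  have heq : conjExtension J A K - 1 =
      (A - 1) ∘L K.starProjection - J ∘L (A - 1) ∘L J ∘L (1 - K.starProjection) := by
    ext x
    simp only [sub_apply, one_apply_eq_self, comp_apply, conjExtension_apply, map_sub,
      apply_apply_of_mul_self_eq_neg_one hJ2]
    abel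
  rw [heq]
  exact (hA.comp_clm _).sub ((hA.comp_clm _).clm_comp J)

theorem injective_conjExtension (hJ2 : J * J = -1) (hK : IsCoisotropic J K)
    (hL : IsIsotropic J (K.map (A : X →ₗ[ℝ] X))) (hA : Function.Injective A) :
    Function.Injective (conjExtension J A K) := by
  rw [injective_iff_map_eq_zero]
  intro x hx
  rw [conjExtension_apply, sub_eq_zero] at hx
  have hk₁ : K.starProjection x ∈ K := K.starProjection_apply_mem x
  have hk₂ : J (x - K.starProjection x) ∈ K :=
    hK.apply_mem_of_mem_orthogonal hJ2 (K.sub_starProjection_mem_orthogonal x)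
  have hAk₂ : A (J (x - K.starProjection x)) = 0 :=
    hL.eq_zero_of_forall_inner_sub_apply hJ2 (Submodule.mem_map_of_mem hk₁)
      (Submodule.mem_map_of_mem hk₂) fun w _ => by simp [hx]
  have hPx : K.starProjection x = 0 :=
    (map_eq_zero_iff A hA).1 (by rw [hx, hAk₂, map_zero])
  have := congrArg J ((map_eq_zero_iff A hA).1 hAk₂)
  rwa [apply_apply_of_mul_self_eq_neg_one hJ2, map_zero, neg_eq_zero, hPx, sub_zero] at this

end Symplectic

theorem statement3_general {X : Type*} [NormedAddCommGroup X] [InnerProductSpace ℝ X]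
    [CompleteSpace X]
    (J : X →L[ℝ] X) (hJ2 : J * J = -1)
    (K : Submodule ℝ X) (hKclosed : IsClosed (K : Set X))
    (hKmax : ∀ u : X, (∀ v ∈ K, (inner ℝ (J u) v : ℝ) = 0) → u ∈ K)
    (A : X →L[ℝ] X) (hA : IsUnit A) (hAc : IsCompactOperator (⇑(A - 1)))
    (hLiso : ∀ u ∈ K.map (A : X →ₗ[ℝ] X), ∀ v ∈ K.map (A : X →ₗ[ℝ] X), (inner ℝ (J u) v : ℝ) = 0) :
    IsClosed ((K.map (A : X →ₗ[ℝ] X) : Submodule ℝ X) : Set X) ∧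
      ∀ u : X, (∀ v ∈ K.map (A : X →ₗ[ℝ] X), (inner ℝ (J u) v : ℝ) = 0) → u ∈ K.map (A : X →ₗ[ℝ] X) := by
  refine ⟨Submodule.isClosed_map_of_isUnit hA hKclosed, fun w hw => ?_⟩
  have : CompleteSpace K := hKclosed.completeSpace_coe
  have hA_inj : Function.Injective A := (ContinuousLinearEquiv.unitsEquiv ℝ X hA.unit).injective
  obtain ⟨x, rfl⟩ := surjective_of_injective_of_isCompactOperator_sub_one
    (Symplectic.isCompactOperator_conjExtension_sub_one (K := K) hJ2 hAc)
    (Symplectic.injective_conjExtension hJ2 hKmax hLiso hA_inj) w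
  rw [Symplectic.conjExtension_apply] at hw ⊢
  have hk₁ : A (K.starProjection x) ∈ K.map (A : X →ₗ[ℝ] X) :=
    Submodule.mem_map_of_mem (K.starProjection_apply_mem x)
  have hk₂ : A (J (x - K.starProjection x)) ∈ K.map (A : X →ₗ[ℝ] X) :=
    Submodule.mem_map_of_mem (Symplectic.IsCoisotropic.apply_mem_of_mem_orthogonal hKmax hJ2
      (K.sub_starProjection_mem_orthogonal x))
  rw [Symplectic.IsIsotropic.eq_zero_of_forall_inner_sub_apply hLiso hJ2 hk₁ hk₂ hw, map_zero,
    sub_zero]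
  exact hk₁

/-- If `K` is Lagrangian, `A` is boundedly invertible with `A - I` compact, and the
symplectic form `ω(u,v) = ⟨Ju,v⟩` vanishes on `L = A(K)`, then `L` is Lagrangian
(closed and maximal isotropic). -/
theorem statement3 {X : Type*} [NormedAddCommGroup X] [InnerProductSpace ℝ X]
    [CompleteSpace X]
    (J : X →L[ℝ] X) (hJadj : ContinuousLinearMap.adjoint J = -J) (hJ2 : J * J = -1)
    (K : Submodule ℝ X) (hKclosed : IsClosed (K : Set X))
    (hKiso : ∀ u ∈ K, ∀ v ∈ K, (inner ℝ (J u) v : ℝ) = 0)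
    (hKmax : ∀ u : X, (∀ v ∈ K, (inner ℝ (J u) v : ℝ) = 0) → u ∈ K)
    (A : X →L[ℝ] X) (hA : IsUnit A) (hAc : IsCompactOperator (⇑(A - 1)))
    (hLiso : ∀ u ∈ K.map (A : X →ₗ[ℝ] X), ∀ v ∈ K.map (A : X →ₗ[ℝ] X), (inner ℝ (J u) v : ℝ) = 0) :
    IsClosed ((K.map (A : X →ₗ[ℝ] X) : Submodule ℝ X) : Set X) ∧
      ∀ u : X, (∀ v ∈ K.map (A : X →ₗ[ℝ] X), (inner ℝ (J u) v : ℝ) = 0) → u ∈ K.map (A : X →ₗ[ℝ] X) :=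
  statement3_general J hJ2 K hKclosed hKmax A hA hAc hLiso
end

section
/- Let X be a Hilbert space, {A_s} a continuous family of bounded operators with A_s - I compact for each s, and L a closed subspace with ran(A_s) + L = X for all s. Fix s₀. Then there exist a neighborhood Σ₀ of s₀ and a family {B_s} of bounded operators such that A_s - B_s has finite rank, B_s is boundedly invertible with B_s - I and B_s⁻¹ - I compact, the preimage K_s = {u ∈ X : A_s u ∈ L} equals B_s⁻¹(L), and s ↦ B_s is continuous (and is C^k if s ↦ A_s is C^k). -/
/-!
Approximating the compact operator `A s₀ - 1` within norm `1` by a finite-rank `F` writes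
`A s₀ = U + F` with `U` invertible, so `A s₀` has a finite-dimensional kernel and a range of the
same finite codimension. Since `ran (A s₀) + L = X`, a complement `Z` of that range can be chosen
inside `L`; sending the kernel isomorphically onto `Z` through a continuous projection gives a
finite-rank `C` with values in `L` such that `A s₀ + C` is invertible. Then `B s = A s + C` works
near `s₀`: invertibility is an open condition, `B` is as smooth as `A`, and `C u ∈ L` gives
`A s u ∈ L ↔ B s u ∈ L`.
-/

open LinearMap Submodule

theorem ContinuousLinearMap.isCompactOperator_of_finiteDimensional_range {𝕜 E F : Type*}
    [RCLike 𝕜] [NormedAddCommGroup E] [NormedSpace 𝕜 E] [NormedAddCommGroup F] [NormedSpace 𝕜 F]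
    (f : E →L[𝕜] F) [FiniteDimensional 𝕜 (range (f : E →ₗ[𝕜] F))] : IsCompactOperator f :=
  (isCompactOperator_of_locallyCompactSpace_dom
    (f.codRestrict _ (mem_range_self (f : E →ₗ[𝕜] F)))).continuous_comp continuous_subtype_val

theorem IsCompactOperator.exists_finiteDimensional_range_norm_sub_lt {𝕜 E F : Type*} [RCLike 𝕜]
    [NormedAddCommGroup E] [NormedSpace 𝕜 E] [NormedAddCommGroup F] [InnerProductSpace 𝕜 F]
    {K : E →L[𝕜] F} (hK : IsCompactOperator K) {ε : ℝ} (hε : 0 < ε) :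
    ∃ K' : E →L[𝕜] F, FiniteDimensional 𝕜 (range (K' : E →ₗ[𝕜] F)) ∧ ‖K - K'‖ < ε := by
  obtain ⟨t, ht, hnet⟩ := Metric.totallyBounded_iff.mp
    (hK.isCompact_closure_image_closedBall 1).totallyBounded (ε / 2) (half_pos hε)
  let V := span 𝕜 t
  have : FiniteDimensional 𝕜 V := FiniteDimensional.span_of_finite 𝕜 ht
  refine ⟨V.starProjection ∘L K, ?_, ?_⟩
  · refine Submodule.finiteDimensional_of_le (S₂ := V) ?_
    rintro _ ⟨x, rfl⟩
    exact V.starProjection_apply_mem (K x)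
  have hbound : ∀ x, ‖x‖ = 1 → ‖(K - V.starProjection ∘L K) x‖ ≤ ε / 2 := by
    intro x hx
    have hKx : K x ∈ closure (K '' Metric.closedBall 0 1) :=
      subset_closure ⟨x, by simp [hx], rfl⟩
    obtain ⟨y, hyt, hxy⟩ := Set.mem_iUnion₂.mp (hnet hKx)
    calc ‖(K - V.starProjection ∘L K) x‖ = ⨅ v : V, ‖K x - v‖ := V.starProjection_minimal (K x)
      _ ≤ ‖K x - y‖ := ciInf_le (f := fun v : V => ‖K x - v‖)
          ⟨0, by rintro _ ⟨v, rfl⟩; positivity⟩ ⟨y, subset_span hyt⟩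
      _ ≤ ε / 2 := (mem_ball_iff_norm.mp hxy).le
  exact (ContinuousLinearMap.opNorm_le_of_unit_norm (half_pos hε).le hbound).trans_lt
    (half_lt_self hε)

namespace LinearEquiv

variable {K V V' : Type*} [Field K] [AddCommGroup V] [Module K V] [AddCommGroup V'] [Module K V']
  (U : V ≃ₗ[K] V') (F : V →ₗ[K] V')

theorem add_mem_range_of_mem_comap_range (x : V) (hx : x ∈ (range F).comap U.toLinearMap) :
    (U.toLinearMap + F) x ∈ range F :=
  add_mem hx (mem_range_self F x)

theorem ker_add_le_comap_range : ker (U.toLinearMap + F) ≤ (range F).comap U.toLinearMap := by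
  intro x hx
  have : U x = F (-x) := by
    rw [map_neg, eq_neg_iff_add_eq_zero]
    exact hx
  exact ⟨-x, this.symm⟩

theorem range_add_sup_range_eq_top : range (U.toLinearMap + F) ⊔ range F = ⊤ := by
  refine eq_top_iff.mpr fun y _ => ?_
  have : y = (U.toLinearMap + F) (U.symm y) - F (U.symm y) := by simp
  rw [this]
  exact sub_mem (mem_sup_left (mem_range_self _ _)) (mem_sup_right (mem_range_self _ _))

theorem comap_range_add_eq_range_restrict :
    (range (U.toLinearMap + F)).comap (range F).subtype =
      range ((U.toLinearMap + F).restrict (add_mem_range_of_mem_comap_range U F)) := by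
  ext ⟨y, hy⟩
  refine ⟨fun ⟨x, hx⟩ => ?_, fun ⟨x, hx⟩ => ⟨x, congrArg Subtype.val hx⟩⟩
  have hUx : U x ∈ range F := by
    have h : U x = y - F x := eq_sub_of_add_eq hx
    rw [h]
    exact sub_mem hy (mem_range_self F x)
  exact ⟨⟨x, hUx⟩, Subtype.ext hx⟩

theorem finrank_comap_range : Module.finrank K ((range F).comap U.toLinearMap) =
    Module.finrank K (range F) := by
  rw [comap_equiv_eq_map_symm, LinearEquiv.finrank_map_eq]

theorem surjective_mkQ_comp_subtype_range :
    Function.Surjective ((range (U.toLinearMap + F)).mkQ ∘ₗ (range F).subtype) := by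
  have := congrArg (map (range (U.toLinearMap + F)).mkQ) (range_add_sup_range_eq_top U F)
  rwa [Submodule.map_sup, mkQ_map_self, bot_sup_eq, Submodule.map_top, range_mkQ,
    ← range_subtype (range F), ← LinearMap.range_comp, range_eq_top] at this

variable [FiniteDimensional K (range F)]

instance finiteDimensional_comap_range : FiniteDimensional K ((range F).comap U.toLinearMap) := by
  rw [comap_equiv_eq_map_symm]
  infer_instance

instance finiteDimensional_ker_add : FiniteDimensional K (ker (U.toLinearMap + F)) :=
  Submodule.finiteDimensional_of_le (ker_add_le_comap_range U F)

instance finiteDimensional_quotient_range_add :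
    FiniteDimensional K (V' ⧸ range (U.toLinearMap + F)) :=
  Module.Finite.of_surjective _ (surjective_mkQ_comp_subtype_range U F)

theorem finrank_quotient_range_add_eq_finrank_ker_add :
    Module.finrank K (V' ⧸ range (U.toLinearMap + F)) =
      Module.finrank K (ker (U.toLinearMap + F)) := by
  -- both sides equal `dim (range F) - dim ((U + F) (U⁻¹ (range F)))`
  have hq := finrank_range_add_finrank_ker ((range (U.toLinearMap + F)).mkQ ∘ₗ (range F).subtype)
  have hT' := finrank_range_add_finrank_ker
    ((U.toLinearMap + F).restrict (add_mem_range_of_mem_comap_range U F))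
  rw [range_eq_top.mpr (surjective_mkQ_comp_subtype_range U F), finrank_top] at hq
  rw [LinearMap.ker_comp, ker_mkQ, comap_range_add_eq_range_restrict] at hq
  rw [ker_restrict, LinearEquiv.finrank_eq (comapSubtypeEquivOfLe (ker_add_le_comap_range U F)),
    finrank_comap_range] at hT'
  omega

end LinearEquiv

theorem Submodule.exists_isCompl_le_of_sup_eq_top {K V : Type*} [DivisionRing K] [AddCommGroup V]
    [Module K V] {p q : Submodule K V} (h : p ⊔ q = ⊤) : ∃ r ≤ q, IsCompl p r := by
  obtain ⟨c, hc⟩ := (p.comap q.subtype).exists_isCompl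
  refine ⟨c.map q.subtype, map_subtype_le q c, ?_, ?_⟩
  · rw [disjoint_def]
    rintro _ hxp ⟨x, hxc, rfl⟩
    have : x = 0 := (disjoint_def.mp hc.disjoint) x hxp hxc
    simp [this]
  · rw [codisjoint_iff, eq_top_iff, ← h]
    refine sup_le le_sup_left fun x hx => ?_
    obtain ⟨a, ha, b, hb, hab⟩ :=
      mem_sup.mp (hc.sup_eq_top ▸ mem_top : (⟨x, hx⟩ : q) ∈ p.comap q.subtype ⊔ c)
    rw [show x = a + b from congrArg Subtype.val hab.symm]
    exact add_mem (mem_sup_left ha) (mem_sup_right ⟨b, hb, rfl⟩)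

theorem ContinuousLinearMap.exists_isUnit_add_of_isCompl_range {𝕜 X : Type*} [RCLike 𝕜]
    [NormedAddCommGroup X] [NormedSpace 𝕜 X] [CompleteSpace X] (T : X →L[𝕜] X)
    [FiniteDimensional 𝕜 (ker (T : X →ₗ[𝕜] X))] {Z : Submodule 𝕜 X} [FiniteDimensional 𝕜 Z]
    (hZ : IsCompl (range (T : X →ₗ[𝕜] X)) Z)
    (hdim : Module.finrank 𝕜 (ker (T : X →ₗ[𝕜] X)) = Module.finrank 𝕜 Z) :
    ∃ G : X →L[𝕜] X, range (G : X →ₗ[𝕜] X) ≤ Z ∧ IsUnit (T + G) := by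
  set N := ker (T : X →ₗ[𝕜] X)
  obtain ⟨P, hP⟩ := Submodule.ClosedComplemented.of_finiteDimensional N
  let e : N ≃L[𝕜] Z := (LinearEquiv.ofFinrankEq N Z hdim).toContinuousLinearEquiv
  let G : X →L[𝕜] X := Z.subtypeL ∘L (e : N →L[𝕜] Z) ∘L P
  have hGZ : ∀ x, G x ∈ Z := fun x => (e (P x)).2
  refine ⟨G, by rintro _ ⟨x, rfl⟩; exact hGZ x, isUnit_iff_bijective.mpr ⟨?_, ?_⟩⟩
  · refine (injective_iff_map_eq_zero _).mpr fun x hx => ?_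
    have hTx : T x = 0 := by
      have hmem : T x ∈ range (T : X →ₗ[𝕜] X) ⊓ Z :=
        ⟨mem_range_self _ x, (eq_neg_of_add_eq_zero_left hx : T x = -G x) ▸ neg_mem (hGZ x)⟩
      rwa [hZ.inf_eq_bot, mem_bot] at hmem
    have hxN : x ∈ N := hTx
    have : e ⟨x, hxN⟩ = 0 := by
      ext
      simpa [G, hP ⟨x, hxN⟩, hTx] using hx
    simpa using e.map_eq_zero_iff.mp this
  · intro y
    obtain ⟨_, ⟨w, rfl⟩, z, hz, rfl⟩ := mem_sup.mp (hZ.sup_eq_top ▸ mem_top : y ∈ _ ⊔ Z)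
    set n : N := e.symm ⟨z, hz⟩
    refine ⟨w - P w + n, ?_⟩
    have hPx : P (w - P w + n) = n := by simp [hP]
    have hTP : T (P w) = 0 := (P w).2
    have hTn : T n = 0 := n.2
    simp [G, hPx, hTP, hTn, n]

theorem exists_finiteRank_isUnit_add_of_range_sup_eq_top {𝕜 X : Type*} [RCLike 𝕜]
    [NormedAddCommGroup X] [InnerProductSpace 𝕜 X] [CompleteSpace X] {A : X →L[𝕜] X}
    (hA : IsCompactOperator ⇑(A - 1)) {L : Submodule 𝕜 X}
    (hL : range (A : X →ₗ[𝕜] X) ⊔ L = ⊤) :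
    ∃ C : X →L[𝕜] X, FiniteDimensional 𝕜 (range (C : X →ₗ[𝕜] X)) ∧
      range (C : X →ₗ[𝕜] X) ≤ L ∧ IsUnit (A + C) := by
  obtain ⟨F, hF, hAF⟩ := hA.exists_finiteDimensional_range_norm_sub_lt one_pos
  obtain ⟨u, hu⟩ : IsUnit (A - F) := by
    have h := isUnit_one_sub_of_norm_lt_one (x := -(A - 1 - F)) (by rwa [norm_neg])
    rwa [show (1 : X →L[𝕜] X) - -(A - 1 - F) = A - F by abel] at h
  let U : X ≃ₗ[𝕜] X := (ContinuousLinearEquiv.unitsEquiv 𝕜 X u).toLinearEquiv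
  have hAUF : (A : X →ₗ[𝕜] X) = U.toLinearMap + F := by
    ext x
    simp [U, hu]
  have : FiniteDimensional 𝕜 (ker (A : X →ₗ[𝕜] X)) := by
    rw [hAUF]
    infer_instance
  have : FiniteDimensional 𝕜 (X ⧸ range (A : X →ₗ[𝕜] X)) := by
    rw [hAUF]
    infer_instance
  have hindex := LinearEquiv.finrank_quotient_range_add_eq_finrank_ker_add U F
  rw [← hAUF] at hindex
  obtain ⟨Z, hZL, hZ⟩ := Submodule.exists_isCompl_le_of_sup_eq_top hL
  let eZ := quotientEquivOfIsCompl _ _ hZ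
  have : FiniteDimensional 𝕜 Z := eZ.finiteDimensional
  obtain ⟨G, hGZ, hunit⟩ :=
    A.exists_isUnit_add_of_isCompl_range hZ (hindex.symm.trans eZ.finrank_eq)
  exact ⟨G, Submodule.finiteDimensional_of_le hGZ, hGZ.trans hZL, hunit⟩

theorem isCompactOperator_ring_inverse_sub_one {R M : Type*} [Ring R] [TopologicalSpace M]
    [AddCommGroup M] [Module R M] [IsTopologicalAddGroup M] {B : M →L[R] M} (hB : IsUnit B)
    (h : IsCompactOperator ⇑(B - 1)) : IsCompactOperator ⇑(Ring.inverse B - 1) := by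
  obtain ⟨u, rfl⟩ := hB
  have : (↑u⁻¹ : M →L[R] M) - 1 = -(↑u⁻¹ * (↑u - 1)) := by
    rw [mul_sub, Units.inv_mul, mul_one, neg_sub]
  rw [Ring.inverse_unit, this, FunLike.coe_neg, FunLike.coe_mul_eq_comp]
  exact (h.clm_comp _).neg

theorem statement9_general {X : Type*} [NormedAddCommGroup X] [InnerProductSpace ℝ X]
    [CompleteSpace X]
    (k : ℕ) (I : Set ℝ) (A : ℝ → X →L[ℝ] X)
    (hsm : ContDiffOn ℝ k A I)
    (hc : ∀ s ∈ I, IsCompactOperator (⇑(A s - 1)))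
    (L : Submodule ℝ X)
    (hrange : ∀ s ∈ I, LinearMap.range (A s : X →ₗ[ℝ] X) ⊔ L = ⊤)
    (s₀ : ℝ) (hs₀ : s₀ ∈ I) :
    ∃ ε > (0 : ℝ), ∃ B : ℝ → X →L[ℝ] X,
      ContDiffOn ℝ k B (I ∩ Metric.ball s₀ ε) ∧
      ∀ s ∈ I ∩ Metric.ball s₀ ε,
        FiniteDimensional ℝ ↥(LinearMap.range ((A s - B s : X →L[ℝ] X) : X →ₗ[ℝ] X)) ∧
        IsUnit (B s) ∧
        IsCompactOperator (⇑(B s - 1)) ∧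
        IsCompactOperator (⇑(Ring.inverse (B s) - 1)) ∧
        (∀ u : X, A s u ∈ L ↔ B s u ∈ L) := by
  obtain ⟨C, hCfin, hCL, hunit⟩ :=
    exists_finiteRank_isUnit_add_of_range_sup_eq_top (hc s₀ hs₀) (hrange s₀ hs₀)
  have hnear : ∀ᶠ s in nhdsWithin s₀ I, IsUnit (A s + C) :=
    ((hsm.continuousOn s₀ hs₀).add continuousWithinAt_const).eventually_mem
      (Units.isOpen.mem_nhds hunit)
  obtain ⟨ε, hε, hball⟩ := Metric.mem_nhdsWithin_iff.mp hnear
  refine ⟨ε, hε, fun s => A s + C, (hsm.mono Set.inter_subset_left).add contDiffOn_const,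
    fun s hs => ?_⟩
  have hBunit : IsUnit (A s + C) := hball ⟨hs.2, hs.1⟩
  have hB1 : IsCompactOperator ⇑(A s + C - 1) := by
    rw [add_sub_right_comm, FunLike.coe_add]
    exact (hc s hs.1).add C.isCompactOperator_of_finiteDimensional_range
  refine ⟨?_, hBunit, hB1, isCompactOperator_ring_inverse_sub_one hBunit hB1, fun u => ?_⟩
  · rwa [sub_add_cancel_left, ContinuousLinearMap.toLinearMap_neg, LinearMap.range_neg]
  · exact (L.add_mem_iff_left (hCL (mem_range_self _ u))).symm

/-- Continuous (or `C^k`) family `A s` with `A s - 1` compact and `ran (A s) + L = X`: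
near any `s₀` there is a `C^k` family `B s` of boundedly invertible operators, differing
from `A s` by finite rank, with `B s - 1` and `B s⁻¹ - 1` compact, such that
`{u : A s u ∈ L} = B s⁻¹ (L)`. -/
theorem statement9 {X : Type*} [NormedAddCommGroup X] [InnerProductSpace ℝ X]
    [CompleteSpace X]
    (k : ℕ) (I : Set ℝ) (A : ℝ → X →L[ℝ] X)
    (hsm : ContDiffOn ℝ k A I)
    (hc : ∀ s ∈ I, IsCompactOperator (⇑(A s - 1)))
    (L : Submodule ℝ X) (hL : IsClosed (L : Set X))
    (hrange : ∀ s ∈ I, LinearMap.range (A s : X →ₗ[ℝ] X) ⊔ L = ⊤)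
    (s₀ : ℝ) (hs₀ : s₀ ∈ I) :
    ∃ ε > (0 : ℝ), ∃ B : ℝ → X →L[ℝ] X,
      ContDiffOn ℝ k B (I ∩ Metric.ball s₀ ε) ∧
      ∀ s ∈ I ∩ Metric.ball s₀ ε,
        FiniteDimensional ℝ ↥(LinearMap.range ((A s - B s : X →L[ℝ] X) : X →ₗ[ℝ] X)) ∧
        IsUnit (B s) ∧
        IsCompactOperator (⇑(B s - 1)) ∧
        IsCompactOperator (⇑(Ring.inverse (B s) - 1)) ∧
        (∀ u : X, A s u ∈ L ↔ B s u ∈ L) :=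
  statement9_general k I A hsm hc L hrange s₀ hs₀
end

section
/- Let X be a Hilbert space, Q a projection, D ∈ B(ran(Q), X) injective, A = DQ + (I − Q) with A − I compact. Let S₀ : (I − Q)(ker A) → (ran A)^⊥ be a linear bijection (such exists since these spaces have equal finite dimension) and R₀ the orthogonal projection onto (I − Q)(ker A). Then F = A + S₀ R₀ (I − Q) is boundedly invertible, F − I is compact, and ran(F Q) = ran(A Q). -/
/-!
`F - 1 = (A - 1) + S₀ R₀ (1 - Q)` is compact because `ker A` is finite dimensional (Riesz), so the
correction term has finite rank. The correction takes values in `(ran A)ᗮ`, so `F x = 0` forces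
`A x = 0` and `S₀ R₀ (1 - Q) x = 0`; injectivity of `S₀` on `ran R₀` then gives `(1 - Q) x = 0`,
and injectivity of `D` gives `Q x = 0`. An injective compact perturbation of the identity is
invertible by the Fredholm alternative. Finally `(1 - Q) Q = 0`, so `F Q = A Q`.
-/

open Module End

section NormedSpace

variable {𝕜 E G : Type*} [NontriviallyNormedField 𝕜] [NormedAddCommGroup E] [NormedSpace 𝕜 E]
  [NormedAddCommGroup G] [NormedSpace 𝕜 G]

theorem IsCompactOperator.of_finiteDimensional_range [ProperSpace 𝕜] (T : E →L[𝕜] G)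
    [FiniteDimensional 𝕜 (LinearMap.range (T : E →ₗ[𝕜] G))] : IsCompactOperator T := by
  have := FiniteDimensional.proper 𝕜 (LinearMap.range (T : E →ₗ[𝕜] G))
  exact (isCompactOperator_of_locallyCompactSpace_dom T.rangeRestrict).clm_comp
    (LinearMap.range (T : E →ₗ[𝕜] G)).subtypeL

theorem eigenspace_sub_one_neg_one (T : E →L[𝕜] E) :
    eigenspace ((T - 1 : E →L[𝕜] E) : End 𝕜 E) (-1) = LinearMap.ker (T : E →ₗ[𝕜] E) := by
  rw [eigenspace_def]
  congr 1
  ext x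
  simp

theorem isUnit_of_injective_of_isCompactOperator_sub_one [CompleteSpace E] {T : E →L[𝕜] E}
    (hT : IsCompactOperator ⇑(T - 1)) (hinj : Function.Injective T) : IsUnit T := by
  have hnot : ¬ HasEigenvalue ((T - 1 : E →L[𝕜] E) : End 𝕜 E) (-1) := by
    rw [hasEigenvalue_iff, eigenspace_sub_one_neg_one, not_not]
    exact LinearMap.ker_eq_bot.2 hinj
  have hres := (hT.hasEigenvalue_or_mem_resolventSet (neg_ne_zero.2 one_ne_zero)).resolve_left hnot
  rw [spectrum.mem_resolventSet_iff] at hres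
  simpa using hres.neg

theorem disjoint_ker_mul_range {S R : E →L[𝕜] E} (hR : IsIdempotentElem R)
    (hS : Set.InjOn S (LinearMap.range (R : E →ₗ[𝕜] E))) :
    Disjoint (LinearMap.ker ((S * R : E →L[𝕜] E) : E →ₗ[𝕜] E)) (LinearMap.range (R : E →ₗ[𝕜] E)) := by
  rw [Submodule.disjoint_def]
  rintro _ hSR ⟨y, rfl⟩
  have hRR : R (R y) = R y := congrArg (· y) hR.eq
  have hSRy : S (R y) = S 0 := by
    rw [map_zero, ← hRR]
    exact hSR
  exact hS ⟨y, rfl⟩ ⟨0, map_zero R⟩ hSRy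

theorem disjoint_ker_comp_codRestrict_add_one_sub {Q : E →L[𝕜] E}
    {D : LinearMap.range (Q : E →ₗ[𝕜] E) →L[𝕜] E} (hD : Function.Injective D) :
    Disjoint
      (LinearMap.ker ((D.comp (Q.codRestrict (LinearMap.range (Q : E →ₗ[𝕜] E))
        (fun x => LinearMap.mem_range_self (Q : E →ₗ[𝕜] E) x)) + (1 - Q) : E →L[𝕜] E) : E →ₗ[𝕜] E))
      (LinearMap.ker ((1 - Q : E →L[𝕜] E) : E →ₗ[𝕜] E)) := by
  rw [Submodule.disjoint_def]
  intro x hAx hQx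
  have hQx : x - Q x = 0 := hQx
  have hDQx : D ⟨Q x, LinearMap.mem_range_self (Q : E →ₗ[𝕜] E) x⟩ = 0 := by
    have : D ⟨Q x, _⟩ + (x - Q x) = 0 := hAx
    rwa [hQx, add_zero] at this
  have hQx0 : Q x = 0 := congrArg Subtype.val (hD (hDQx.trans (map_zero D).symm))
  rwa [hQx0, sub_zero] at hQx

end NormedSpace

section InnerProductSpace

variable {𝕜 E : Type*} [RCLike 𝕜] [NormedAddCommGroup E] [InnerProductSpace 𝕜 E]

theorem finiteDimensional_ker_of_isCompactOperator_sub_one [CompleteSpace E] {T : E →L[𝕜] E}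
    (hT : IsCompactOperator ⇑(T - 1)) : FiniteDimensional 𝕜 (LinearMap.ker (T : E →ₗ[𝕜] E)) := by
  rw [← eigenspace_sub_one_neg_one]
  exact ContinuousLinearMap.finite_dimensional_eigenspace hT (-1) (neg_ne_zero.2 one_ne_zero)

theorem injective_add_of_range_le_orthogonal {A T : E →L[𝕜] E}
    (hT : LinearMap.range (T : E →ₗ[𝕜] E) ≤ (LinearMap.range (A : E →ₗ[𝕜] E))ᗮ)
    (h : ∀ x, A x = 0 → T x = 0 → x = 0) : Function.Injective (A + T) := by
  refine (injective_iff_map_eq_zero _).2 fun x hx => ?_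
  have hAT : A x = -T x := eq_neg_of_add_eq_zero_left hx
  have hAx : A x = 0 := Submodule.disjoint_def.1 (Submodule.orthogonal_disjoint _) _
    (LinearMap.mem_range_self _ x) (hAT ▸ neg_mem (hT (LinearMap.mem_range_self _ x)))
  exact h x hAx (by simpa [hAx] using hAT)

end InnerProductSpace

theorem statement11_general {X : Type*} [NormedAddCommGroup X] [InnerProductSpace ℝ X]
    [CompleteSpace X]
    (Q : X →L[ℝ] X) (hQ : IsIdempotentElem Q)
    (D : ↥(LinearMap.range (Q : X →ₗ[ℝ] X)) →L[ℝ] X) (hD : Function.Injective ⇑D)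
    (A : X →L[ℝ] X)
    (hA : A = D.comp (Q.codRestrict (LinearMap.range (Q : X →ₗ[ℝ] X))
      (fun x => LinearMap.mem_range_self (Q : X →ₗ[ℝ] X) x)) + (1 - Q))
    (hAc : IsCompactOperator (⇑(A - 1)))
    (R₀ : X →L[ℝ] X) (hR₀idem : IsIdempotentElem R₀)
    (hR₀range : LinearMap.range (R₀ : X →ₗ[ℝ] X) = Submodule.map ((1 - Q : X →L[ℝ] X) : X →ₗ[ℝ] X) (LinearMap.ker (A : X →ₗ[ℝ] X)))
    (S₀ : X →L[ℝ] X)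
    (hS₀inj : Set.InjOn ⇑S₀ ((Submodule.map ((1 - Q : X →L[ℝ] X) : X →ₗ[ℝ] X) (LinearMap.ker (A : X →ₗ[ℝ] X)) : Submodule ℝ X) : Set X))
    (hS₀range : Submodule.map (S₀ : X →ₗ[ℝ] X) (Submodule.map ((1 - Q : X →L[ℝ] X) : X →ₗ[ℝ] X) (LinearMap.ker (A : X →ₗ[ℝ] X)))
      = (LinearMap.range (A : X →ₗ[ℝ] X))ᗮ)
    (F : X →L[ℝ] X) (hF : F = A + S₀ * R₀ * (1 - Q)) :
    IsUnit F ∧ IsCompactOperator (⇑(F - 1)) ∧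
      LinearMap.range ((F * Q : X →L[ℝ] X) : X →ₗ[ℝ] X) = LinearMap.range ((A * Q : X →L[ℝ] X) : X →ₗ[ℝ] X) := by
  set T : X →L[ℝ] X := S₀ * R₀ * (1 - Q)
  rw [← hR₀range] at hS₀inj hS₀range
  have := finiteDimensional_ker_of_isCompactOperator_sub_one hAc
  have hT_le : LinearMap.range (T : X →ₗ[ℝ] X) ≤ (LinearMap.range (R₀ : X →ₗ[ℝ] X)).map (S₀ : X →ₗ[ℝ] X) := by
    rintro _ ⟨x, rfl⟩
    exact ⟨R₀ ((1 - Q) x), LinearMap.mem_range_self _ _, rfl⟩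
  have : FiniteDimensional ℝ (LinearMap.range (T : X →ₗ[ℝ] X)) := by
    rw [hR₀range] at hT_le
    exact Submodule.finiteDimensional_of_le hT_le
  have hFc : IsCompactOperator ⇑(F - 1) := by
    rw [show F - 1 = (A - 1) + T by rw [hF]; abel]
    exact hAc.add (IsCompactOperator.of_finiteDimensional_range T)
  have hFinj : Function.Injective F := by
    rw [hF]
    refine injective_add_of_range_le_orthogonal (hT_le.trans hS₀range.le) fun x hAx hTx => ?_
    have h1Qx : (1 - Q) x = 0 := Submodule.disjoint_def.1 (disjoint_ker_mul_range hR₀idem hS₀inj) _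
      hTx (hR₀range ▸ ⟨x, hAx, rfl⟩)
    subst hA
    exact Submodule.disjoint_def.1 (disjoint_ker_comp_codRestrict_add_one_sub hD) x hAx h1Qx
  refine ⟨isUnit_of_injective_of_isCompactOperator_sub_one hFc hFinj, hFc, ?_⟩
  rw [hF, add_mul, mul_assoc (S₀ * R₀), hQ.one_sub_mul_self, mul_zero, add_zero]

/-- With `A = DQ + (1 - Q)`, `A - 1` compact, `S₀` a bijection from `(1-Q)(ker A)` onto
`(ran A)^⊥` and `R₀` the orthogonal projection onto `(1-Q)(ker A)`, the operator
`F = A + S₀ R₀ (1 - Q)` is boundedly invertible, `F - 1` is compact, and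
`ran (F Q) = ran (A Q)`. -/
theorem statement11 {X : Type*} [NormedAddCommGroup X] [InnerProductSpace ℝ X]
    [CompleteSpace X]
    (Q : X →L[ℝ] X) (hQ : IsIdempotentElem Q)
    (D : ↥(LinearMap.range (Q : X →ₗ[ℝ] X)) →L[ℝ] X) (hD : Function.Injective ⇑D)
    (A : X →L[ℝ] X)
    (hA : A = D.comp (Q.codRestrict (LinearMap.range (Q : X →ₗ[ℝ] X))
      (fun x => LinearMap.mem_range_self (Q : X →ₗ[ℝ] X) x)) + (1 - Q))
    (hAc : IsCompactOperator (⇑(A - 1)))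
    (R₀ : X →L[ℝ] X) (hR₀idem : IsIdempotentElem R₀) (hR₀sa : IsSelfAdjoint R₀)
    (hR₀range : LinearMap.range (R₀ : X →ₗ[ℝ] X) = Submodule.map ((1 - Q : X →L[ℝ] X) : X →ₗ[ℝ] X) (LinearMap.ker (A : X →ₗ[ℝ] X)))
    (S₀ : X →L[ℝ] X)
    (hS₀inj : Set.InjOn ⇑S₀ ((Submodule.map ((1 - Q : X →L[ℝ] X) : X →ₗ[ℝ] X) (LinearMap.ker (A : X →ₗ[ℝ] X)) : Submodule ℝ X) : Set X))
    (hS₀range : Submodule.map (S₀ : X →ₗ[ℝ] X) (Submodule.map ((1 - Q : X →L[ℝ] X) : X →ₗ[ℝ] X) (LinearMap.ker (A : X →ₗ[ℝ] X)))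
      = (LinearMap.range (A : X →ₗ[ℝ] X))ᗮ)
    (F : X →L[ℝ] X) (hF : F = A + S₀ * R₀ * (1 - Q)) :
    IsUnit F ∧ IsCompactOperator (⇑(F - 1)) ∧
      LinearMap.range ((F * Q : X →L[ℝ] X) : X →ₗ[ℝ] X) = LinearMap.range ((A * Q : X →L[ℝ] X) : X →ₗ[ℝ] X) :=
  statement11_general Q hQ D hD A hA hAc R₀ hR₀idem hR₀range S₀ hS₀inj hS₀range F hF
end

section
/- Let P be a (not necessarily orthogonal) bounded projection on a Hilbert space X. Then PP* + (I - P*)(I - P) is boundedly invertible, and Π = PP*(PP* + (I - P*)(I - P))⁻¹ is the orthogonal projection onto ran(P). -/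
/-!
Write `G = PP* + (1 - P*)(1 - P)`. Idempotence of `P` turns `G` into `1 + D*D` with
`D = P* - P`, so `⟪Gx, x⟫ ≥ ‖x‖²` and `G` is invertible. It also gives `PG = PP*P = GP`, so
`G⁻¹` commutes with `P` and `P*`. Hence `Π = PP*G⁻¹` is self-adjoint, and `ΠP = PP*P G⁻¹ = P`,
from which `Π² = Π` and `ran Π = ran P` follow.
-/

open ContinuousLinearMap

theorem Commute.ringInverse_right {M₀ : Type*} [MonoidWithZero M₀] {a b : M₀}
    (h : Commute a b) : Commute a (Ring.inverse b) := by
  by_cases hb : IsUnit b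
  · obtain ⟨u, rfl⟩ := hb
    rw [Ring.inverse_unit]
    exact h.units_inv_right
  · rw [Ring.inverse_non_unit b hb]
    exact Commute.zero_right a

theorem ContinuousLinearMap.isUnit_one_add_adjoint_mul_self {𝕜 E : Type*} [RCLike 𝕜]
    [NormedAddCommGroup E] [InnerProductSpace 𝕜 E] [CompleteSpace E] (D : E →L[𝕜] E) :
    IsUnit (1 + adjoint D * D) := by
  refine isUnit_of_forall_le_norm_inner_map _ one_pos fun x ↦ ?_
  have h : inner 𝕜 ((1 + adjoint D * D) x) x = ((‖x‖ ^ 2 + ‖D x‖ ^ 2 : ℝ) : 𝕜) := by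
    rw [add_apply, one_apply_eq_self, mul_apply_eq_comp, inner_add_left, adjoint_inner_left,
      inner_self_eq_norm_sq_to_K, inner_self_eq_norm_sq_to_K]
    push_cast
    rfl
  rw [h, RCLike.norm_ofReal, abs_of_nonneg (by positivity), NNReal.coe_one, mul_one]
  exact le_add_of_nonneg_right (sq_nonneg _)

theorem ContinuousLinearMap.range_eq_range_of_mul_eq {R M : Type*} [Semiring R]
    [TopologicalSpace M] [AddCommMonoid M] [Module R M] {f g : M →L[R] M} (a b : M →L[R] M)
    (hf : f * a = g) (hg : g * b = f) :
    LinearMap.range (f : M →ₗ[R] M) = LinearMap.range (g : M →ₗ[R] M) := by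
  apply le_antisymm
  · rw [← hg]
    exact LinearMap.range_comp_le_range _ _
  · rw [← hf]
    exact LinearMap.range_comp_le_range _ _

section StarRing

variable {R : Type*} [Ring R] [StarRing R] {p : R}

def projGram (p : R) : R := p * star p + (1 - star p) * (1 - p)

theorem isSelfAdjoint_projGram (p : R) : IsSelfAdjoint (projGram p) := by
  simp only [projGram, IsSelfAdjoint, star_add, star_mul, star_sub, star_one, star_star]

theorem projGram_eq_one_add (hp : IsIdempotentElem p) :
    projGram p = 1 + star (star p - p) * (star p - p) := by
  have hp' : star p * star p = star p := by rw [← star_mul, hp.eq]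
  simp only [projGram, star_sub, star_star, mul_sub, sub_mul, one_mul, mul_one, hp.eq, hp']
  noncomm_ring

theorem mul_projGram (hp : IsIdempotentElem p) : p * projGram p = p * star p * p := by
  simp only [projGram, mul_add, mul_sub, sub_mul, mul_one, ← mul_assoc, hp.eq]
  noncomm_ring

theorem projGram_mul (hp : IsIdempotentElem p) : projGram p * p = p * star p * p := by
  simp only [projGram, add_mul, mul_sub, sub_mul, mul_one, one_mul, mul_assoc, hp.eq]
  noncomm_ring

theorem commute_projGram (hp : IsIdempotentElem p) : Commute p (projGram p) :=
  (mul_projGram hp).trans (projGram_mul hp).symm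

theorem commute_star_projGram (hp : IsIdempotentElem p) : Commute (star p) (projGram p) := by
  simpa only [(isSelfAdjoint_projGram p).star_eq] using (commute_projGram hp).star_star

noncomputable def rangeProj (p : R) : R := p * star p * Ring.inverse (projGram p)

theorem rangeProj_mul_self (hp : IsIdempotentElem p) (hu : IsUnit (projGram p)) :
    rangeProj p * p = p :=
  calc rangeProj p * p = p * star p * p * Ring.inverse (projGram p) := by
        rw [rangeProj, mul_assoc _ _ p, ← (commute_projGram hp).ringInverse_right.eq, ← mul_assoc]
    _ = p * (projGram p * Ring.inverse (projGram p)) := by rw [← mul_projGram hp, mul_assoc]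
    _ = p := by rw [Ring.mul_inverse_cancel _ hu, mul_one]

theorem isIdempotentElem_rangeProj (hp : IsIdempotentElem p) (hu : IsUnit (projGram p)) :
    IsIdempotentElem (rangeProj p) := by
  unfold IsIdempotentElem
  nth_rw 2 [rangeProj]
  rw [← mul_assoc, ← mul_assoc, rangeProj_mul_self hp hu, rangeProj]

theorem isSelfAdjoint_rangeProj (hp : IsIdempotentElem p) : IsSelfAdjoint (rangeProj p) := by
  have hc : Commute (p * star p) (Ring.inverse (projGram p)) :=
    ((commute_projGram hp).mul_left (commute_star_projGram hp)).ringInverse_right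
  rw [IsSelfAdjoint, rangeProj, star_mul, (isSelfAdjoint_projGram p).ringInverse.star_eq,
    (IsSelfAdjoint.mul_star_self p).star_eq]
  exact hc.eq.symm

end StarRing

theorem ContinuousLinearMap.isUnit_projGram {𝕜 E : Type*} [RCLike 𝕜] [NormedAddCommGroup E]
    [InnerProductSpace 𝕜 E] [CompleteSpace E] {P : E →L[𝕜] E} (hP : IsIdempotentElem P) :
    IsUnit (projGram P) := by
  rw [projGram_eq_one_add hP]
  exact isUnit_one_add_adjoint_mul_self _

/-- For a (not necessarily orthogonal) bounded projection `P` on a Hilbert space,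
`PP* + (1 - P*)(1 - P)` is boundedly invertible and
`Π = PP* (PP* + (1 - P*)(1 - P))⁻¹` is the orthogonal projection onto `ran P`. -/
theorem statement18 {X : Type*} [NormedAddCommGroup X] [InnerProductSpace ℝ X]
    [CompleteSpace X]
    (P : X →L[ℝ] X) (hP : IsIdempotentElem P) :
    IsUnit (P * ContinuousLinearMap.adjoint P
        + (1 - ContinuousLinearMap.adjoint P) * (1 - P)) ∧
    IsIdempotentElem ((P * ContinuousLinearMap.adjoint P) *
      Ring.inverse (P * ContinuousLinearMap.adjoint P
        + (1 - ContinuousLinearMap.adjoint P) * (1 - P))) ∧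
    IsSelfAdjoint ((P * ContinuousLinearMap.adjoint P) *
      Ring.inverse (P * ContinuousLinearMap.adjoint P
        + (1 - ContinuousLinearMap.adjoint P) * (1 - P))) ∧
    LinearMap.range ((((P * ContinuousLinearMap.adjoint P) *
      Ring.inverse (P * ContinuousLinearMap.adjoint P
        + (1 - ContinuousLinearMap.adjoint P) * (1 - P)) : X →L[ℝ] X) : X →ₗ[ℝ] X))
      = LinearMap.range (P : X →ₗ[ℝ] X) := by
  have hu : IsUnit (projGram P) := isUnit_projGram hP
  exact ⟨hu, isIdempotentElem_rangeProj hP hu, isSelfAdjoint_rangeProj hP,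
    range_eq_range_of_mul_eq P _ (rangeProj_mul_self hP hu) (mul_assoc _ _ _).symm⟩
end
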